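/- arXiv:2104.04347 — 2 statements merged into one kernel-verified Lean document; each statement's English description precedes it below -/
import Mathlib

section
/- Suppose ŵ_0 = 1 + (στ/(β_0² + ε))^α and ŵ_m = (στ/(β_m² + ε))^α for m = 1,2, with σ, τ ≥ 0, β_m ≥ 0, ε > 0, α > 0. If σ = C_σ·h^{2(P+1)}, τ = C_τ·h^{2P}, and β_m ≥ c·h^2 for all m with positive constants C_σ, C_τ, c, then the normalized weights satisfy w_m ≤ K·h^{α(4P-2)} for m = 1,2 and some constant K independent of h, for all sufficiently small h > 0. -/
/-- Asymptotic estimate for the high-order WENO-type weights: if `σ = C_σ h^{2(P+1)}`,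
`τ = C_τ h^{2P}` and `β_m ≥ c h²`, then for small `h` the normalized weights of the
low-order candidates satisfy `w_m ≤ K h^{α(4P-2)}` for `m = 1,2`. -/
theorem stmt10 (P : ℕ) (hP : 2 ≤ P) (α Cσ Cτ c ε : ℝ)
    (hα : 0 < α) (hCσ : 0 < Cσ) (hCτ : 0 < Cτ) (hc : 0 < c) (hε : 0 < ε) :
    ∃ K > (0:ℝ), ∃ h₀ > (0:ℝ), ∀ h : ℝ, 0 < h → h ≤ h₀ →
      ∀ β : Fin 3 → ℝ, (∀ m, c * h ^ 2 ≤ β m) →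
        let σ : ℝ := Cσ * h ^ (2*(P+1))
        let τ : ℝ := Cτ * h ^ (2*P)
        let wh : Fin 3 → ℝ := fun m =>
          if m = 0 then 1 + (σ * τ / ((β 0) ^ 2 + ε)) ^ α
          else (σ * τ / ((β m) ^ 2 + ε)) ^ α
        ∀ m : Fin 3, m ≠ 0 →
          wh m / (wh 0 + wh 1 + wh 2) ≤ K * h ^ (α * (4 * (P:ℝ) - 2)) := by
  refine ⟨(Cσ * Cτ / ε) ^ α, Real.rpow_pos_of_pos (by positivity) _, 1, one_pos, ?_⟩
  intro h hh h1 β hβ σ τ wh m hm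
  have hσ : 0 < σ := by positivity
  have hτ : 0 < τ := by positivity
  have hεm : ∀ k : Fin 3, (0:ℝ) < (β k) ^ 2 + ε := fun k => by positivity
  have hwhnn : ∀ k : Fin 3, 0 ≤ wh k := by
    intro k
    simp only [wh]
    split
    · have : (0:ℝ) ≤ (σ * τ / ((β 0) ^ 2 + ε)) ^ α := Real.rpow_nonneg (by positivity) _
      linarith
    · exact Real.rpow_nonneg (by positivity) _
  have hden : (1:ℝ) ≤ wh 0 + wh 1 + wh 2 := by
    have h0 : (1:ℝ) ≤ wh 0 := by
      simp only [wh, if_pos rfl]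
      have : (0:ℝ) ≤ (σ * τ / ((β 0) ^ 2 + ε)) ^ α := Real.rpow_nonneg (by positivity) _
      linarith
    have := hwhnn 1
    have := hwhnn 2
    linarith
  have step1 : wh m / (wh 0 + wh 1 + wh 2) ≤ wh m :=
    div_le_self (hwhnn m) hden
  refine step1.trans ?_
  have hwm : wh m = (σ * τ / ((β m) ^ 2 + ε)) ^ α := by
    simp only [wh, if_neg hm]
  rw [hwm]
  -- base bound
  have hbase : σ * τ / ((β m) ^ 2 + ε) ≤ (Cσ * Cτ / ε) * h ^ (4*P+2) := by
    have h1' : σ * τ / ((β m) ^ 2 + ε) ≤ σ * τ / ε := by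
      have : ε ≤ (β m) ^ 2 + ε := by nlinarith [sq_nonneg (β m)]
      gcongr
    have h2' : σ * τ / ε = (Cσ * Cτ / ε) * h ^ (4*P+2) := by
      simp only [σ, τ]
      rw [show 4*P+2 = 2*(P+1) + 2*P by ring, pow_add]
      ring
    linarith [h1', h2'.le]
  have hb1 : (0:ℝ) ≤ σ * τ / ((β m) ^ 2 + ε) := by positivity
  have step2 : (σ * τ / ((β m) ^ 2 + ε)) ^ α ≤ ((Cσ * Cτ / ε) * h ^ (4*P+2)) ^ α :=
    Real.rpow_le_rpow hb1 hbase hα.le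
  refine step2.trans ?_
  rw [Real.mul_rpow (by positivity) (by positivity)]
  have key : (h ^ (4*P+2)) ^ α ≤ h ^ (α * (4 * (P:ℝ) - 2)) := by
    rw [← Real.rpow_natCast h (4*P+2), ← Real.rpow_mul hh.le]
    apply Real.rpow_le_rpow_of_exponent_ge hh h1
    have hPc : (2:ℝ) ≤ (P:ℝ) := by exact_mod_cast hP
    push_cast
    nlinarith
  exact mul_le_mul_of_nonneg_left key (Real.rpow_nonneg (by positivity) _)
end

section
/- For the 2×2 amplification matrix G(θ) = M_{01}·e^{-iθ/2} + M_{02}·e^{iθ/2} of the second-order linear compact central scheme, where M_{01} = [[1/2+ν, 1/8-ν²/2],[-1, ν]] and M_{02} = [[1/2-ν, -1/8+ν²/2],[1, -ν]], both eigenvalues of G(θ) have modulus at most 1 for all θ ∈ ℝ when ν = 1/2. -/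
open Matrix

/-!
At `ν = 1/2` the amplification matrix is lower triangular,
`G(θ) = !![e^{-iθ/2}, 0; e^{iθ/2} - e^{-iθ/2}, (e^{-iθ/2} - e^{iθ/2})/2]`,
so its eigenvalues are `e^{-iθ/2}`, of modulus one, and `-i sin(θ/2)`, an average of two
points of the unit circle.
-/

theorem Matrix.eq_or_eq_of_mem_spectrum_of_fin_two_lowerTriangular {K : Type*} [Field K]
    {p q r μ : K} (h : μ ∈ spectrum K !![p, 0; q, r]) : μ = p ∨ μ = r := by
  rw [mem_spectrum_iff_isRoot_charpoly, charpoly_fin_two, Polynomial.IsRoot.def] at h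
  simp only [Polynomial.eval_add, Polynomial.eval_sub, Polynomial.eval_mul, Polynomial.eval_pow,
    Polynomial.eval_X, Polynomial.eval_C, trace_fin_two_of, det_fin_two_of] at h
  have hfactor : (μ - p) * (μ - r) = 0 := by linear_combination h
  exact (mul_eq_zero.1 hfactor).imp sub_eq_zero.1 sub_eq_zero.1

/-- Von Neumann stability of the 2nd-order linear compact central scheme at the
boundary Courant number `ν = 1/2`: every eigenvalue (spectral value) of the
amplification matrix `G(θ) = M₀₁ e^{-iθ/2} + M₀₂ e^{iθ/2}` has modulus at most 1. -/
theorem stmt18 :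
    let ν : ℂ := 1/2
    let M01 : Matrix (Fin 2) (Fin 2) ℂ := !![1/2 + ν, 1/8 - ν^2/2; -1, ν]
    let M02 : Matrix (Fin 2) (Fin 2) ℂ := !![1/2 - ν, -1/8 + ν^2/2; 1, -ν]
    ∀ θ : ℝ, ∀ μ : ℂ,
      μ ∈ spectrum ℂ
        (Complex.exp (-Complex.I * θ / 2) • M01 + Complex.exp (Complex.I * θ / 2) • M02) →
      ‖μ‖ ≤ 1 := by
  intro ν M01 M02 θ μ hμ
  have ha : ‖Complex.exp (-Complex.I * θ / 2)‖ = 1 := by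
    rw [show -Complex.I * θ / 2 = ((-θ / 2 : ℝ) : ℂ) * Complex.I by push_cast; ring]
    exact Complex.norm_exp_ofReal_mul_I _
  have hb : ‖Complex.exp (Complex.I * θ / 2)‖ = 1 := by
    rw [show Complex.I * θ / 2 = ((θ / 2 : ℝ) : ℂ) * Complex.I by push_cast; ring]
    exact Complex.norm_exp_ofReal_mul_I _
  set a := Complex.exp (-Complex.I * θ / 2)
  set b := Complex.exp (Complex.I * θ / 2)
  have hG : a • M01 + b • M02 = !![a, 0; b - a, (a - b) / 2] := by
    ext i j
    fin_cases i <;> fin_cases j <;> simp [ν, M01, M02] <;> ring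
  rw [hG] at hμ
  rcases eq_or_eq_of_mem_spectrum_of_fin_two_lowerTriangular hμ with rfl | rfl
  · exact ha.le
  · calc ‖(a - b) / 2‖ ≤ (‖a‖ + ‖b‖) / 2 := by
          rw [norm_div, Complex.norm_two]; gcongr; exact norm_sub_le a b
      _ = 1 := by rw [ha, hb]; norm_num
end
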